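/- arXiv:2006.03115 — 2 statements merged into one kernel-verified Lean document; each statement's English description precedes it below -/
import Mathlib

section
/- The limit as n → ∞ of the ratio (n!·(n-2)·C_{n-1}²) / ((n+1)!·C_n²) equals 1/16 (and in particular is positive). Here the numerator counts the fully marked tree pair diagrams of size n of the special form guaranteeing north–south dynamics in Thompson's group V, and the denominator counts all fully marked tree pair diagrams of size n. -/
open Filter Topology

/-! The ratio equals `(n-2)/(n+1) · (C_{n-1}/C_n)²`, and the Catalan recurrence
`(n+1)·C_n = 2(2n-1)·C_{n-1}` turns it into the rational function
`(n-2)(n+1) / (4(2n-1)²)`, whose limit is `1/(4·2²) = 1/16`. -/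

theorem succ_succ_mul_catalan_succ (n : ℕ) :
    (n + 2) * catalan (n + 1) = 2 * (2 * n + 1) * catalan n := by
  apply Nat.eq_of_mul_eq_mul_left n.succ_pos
  calc (n + 1) * ((n + 2) * catalan (n + 1))
      = (n + 1) * (n + 1).centralBinom := by rw [← succ_mul_catalan_eq_centralBinom (n + 1)]
    _ = 2 * (2 * n + 1) * n.centralBinom := Nat.succ_mul_centralBinom_succ n
    _ = (n + 1) * (2 * (2 * n + 1) * catalan n) := by
      rw [← succ_mul_catalan_eq_centralBinom]; ring

theorem catalan_pos (n : ℕ) : 0 < catalan n :=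
  Nat.pos_of_mul_pos_left ((succ_mul_catalan_eq_centralBinom n).symm ▸ n.centralBinom_pos)

theorem catalan_div_catalan_succ (n : ℕ) :
    (catalan n : ℝ) / catalan (n + 1) = (n + 2) / (2 * (2 * n + 1)) := by
  have hrec : ((n : ℝ) + 2) * catalan (n + 1) = 2 * (2 * n + 1) * catalan n := by
    exact_mod_cast succ_succ_mul_catalan_succ n
  have hpos : (0 : ℝ) < catalan (n + 1) := by exact_mod_cast catalan_pos (n + 1)
  rw [div_eq_div_iff hpos.ne' (by positivity)]
  linarith

theorem factorial_mul_catalan_sq_ratio_eq {n : ℕ} (hn : 2 ≤ n) :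
    ((Nat.factorial n * (n - 2) * catalan (n - 1) ^ 2 : ℕ) : ℝ) /
        ((Nat.factorial (n + 1) * catalan n ^ 2 : ℕ) : ℝ) =
      ((n : ℝ) - 2) * (n + 1) / (4 * (2 * n - 1) ^ 2) := by
  obtain ⟨m, rfl⟩ : ∃ m, n = m + 2 := ⟨n - 2, by omega⟩
  have hC := catalan_div_catalan_succ (m + 1)
  have hpos : (0 : ℝ) < catalan (m + 2) := by exact_mod_cast catalan_pos (m + 2)
  rw [div_eq_iff hpos.ne'] at hC
  rw [Nat.factorial_succ (m + 2), Nat.add_sub_cancel, Nat.add_sub_assoc one_le_two]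
  have hden : 2 * ((m : ℝ) + 2) - 1 ≠ 0 := by
    have := m.cast_nonneg (α := ℝ); linarith
  push_cast at hC ⊢
  rw [hC]
  field_simp
  ring

theorem tendsto_sub_two_mul_add_one_div_four_mul_sq :
    Tendsto (fun n : ℕ => ((n : ℝ) - 2) * (n + 1) / (4 * (2 * n - 1) ^ 2)) atTop (𝓝 (1 / 16)) := by
  have h : Tendsto (fun n : ℕ => (1 - 2 * (n : ℝ)⁻¹) * (1 + (n : ℝ)⁻¹) / (4 * (2 - (n : ℝ)⁻¹) ^ 2))
      atTop (𝓝 ((1 - 2 * 0) * (1 + 0) / (4 * (2 - 0) ^ 2))) := by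
    have h0 := tendsto_inv_atTop_nhds_zero_nat (𝕜 := ℝ)
    exact ((tendsto_const_nhds.sub (h0.const_mul 2)).mul (tendsto_const_nhds.add h0)).div
      (((tendsto_const_nhds.sub h0).pow 2).const_mul 4) (by norm_num)
  norm_num at h
  refine h.congr' ((eventually_ge_atTop 1).mono fun n hn => ?_)
  have : (n : ℝ) ≠ 0 := by positivity
  field_simp

/-- The fraction of fully marked tree pair diagrams of size `n` of the special
form guaranteeing north–south dynamics in Thompson's group `V`,
namely `n!·(n-2)·C_{n-1}²` out of all `(n+1)!·C_n²` diagrams, tends to `1/16`. -/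
theorem density_north_south_V :
    Filter.Tendsto
      (fun n : ℕ => ((Nat.factorial n * (n - 2) * catalan (n - 1) ^ 2 : ℕ) : ℝ) /
        ((Nat.factorial (n + 1) * catalan n ^ 2 : ℕ) : ℝ))
      Filter.atTop (nhds (1 / 16)) :=
  tendsto_sub_two_mul_add_one_div_four_mul_sq.congr' <| (eventually_ge_atTop 2).mono fun _ hn =>
    (factorial_mul_catalan_sq_ratio_eq hn).symm
end

section
/- The size of the sphere Sph₂(n) in the stratification for rank-2 subgroups of Thompson's group V, namely ((n+1)!·C_n²)², satisfies: the limit as n → ∞ of ((n+1)!·C_n²)² / ((16/e)^{2n} · n^{2n-3}) equals 2/π. In particular the sphere size is asymptotic to (16/e)^{2n}·n^{2n-3} up to the positive multiplicative constant 2/π. -/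
/-!
Writing `C_n = (2n)! / ((n+1) n!²)`, the sphere size is `(2n)!⁴ / ((n+1)² n!⁶)`. Stirling's formula
`n! = s_n √(2n) (n/e)ⁿ` with `s_n → √π` turns the ratio in question into exactly
`s_{2n}⁴ / s_n⁶ · 2 (n/(n+1))²`, whose limit is `π² / π³ · 2 = 2/π`.
-/

open Filter Real Nat Stirling Topology

theorem Nat.succ_mul_catalan_mul_factorial_sq (n : ℕ) :
    (n + 1) * catalan n * n ! ^ 2 = (2 * n)! := by
  rw [succ_mul_catalan_eq_centralBinom, centralBinom_eq_two_mul_choose, two_mul,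
    ← add_choose_mul_factorial_mul_factorial, mul_assoc, sq]

theorem Nat.factorial_succ_mul_catalan_sq_mul (n : ℕ) :
    (n + 1)! * catalan n ^ 2 * ((n + 1) * n ! ^ 3) = (2 * n)! ^ 2 := by
  rw [← succ_mul_catalan_mul_factorial_sq, factorial_succ]
  ring

namespace Stirling

theorem stirlingSeq_sq_mul {n : ℕ} (hn : n ≠ 0) :
    stirlingSeq n ^ 2 * (2 * n * (n / exp 1) ^ (2 * n)) = (n ! : ℝ) ^ 2 := by
  have hpos : (0 : ℝ) < n := by positivity
  rw [stirlingSeq, div_pow, mul_pow, sq_sqrt (by positivity), ← pow_mul, mul_comm n 2,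
    div_mul_cancel₀ _ (by positivity)]

theorem tendsto_stirlingSeq_two_mul_pow_four_div_pow_six :
    Tendsto (fun n : ℕ => stirlingSeq (2 * n) ^ 4 / stirlingSeq n ^ 6) atTop (𝓝 (1 / π)) := by
  have hdouble : Tendsto (fun n : ℕ => stirlingSeq (2 * n)) atTop (𝓝 √π) :=
    tendsto_stirlingSeq_sqrt_pi.comp (tendsto_id.const_mul_atTop' two_pos)
  have hlim := (hdouble.pow 4).div (tendsto_stirlingSeq_sqrt_pi.pow 6)
    (pow_ne_zero 6 (sqrt_pos.2 pi_pos).ne')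
  have hsq : √π ^ 2 = π := sq_sqrt pi_pos.le
  rwa [show √π ^ 4 / √π ^ 6 = 1 / π by
    rw [show 4 = 2 * 2 by rfl, show 6 = 2 * 3 by rfl, pow_mul, pow_mul, hsq]
    field_simp] at hlim

end Stirling

theorem sphere2_ratio_eq_stirlingSeq {n : ℕ} (hn : n ≠ 0) :
    (((Nat.factorial (n + 1) * catalan n ^ 2) ^ 2 : ℕ) : ℝ) /
        ((16 / exp 1) ^ (2 * n) * (n : ℝ) ^ (2 * (n : ℝ) - 3))
      = stirlingSeq (2 * n) ^ 4 / stirlingSeq n ^ 6 * (2 * (n / (n + 1 : ℝ)) ^ 2) := by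
  have hpos : (0 : ℝ) < n := by positivity
  have hsize : ((((n + 1)! * catalan n ^ 2) ^ 2 : ℕ) : ℝ)
      = (((2 * n)! : ℝ) ^ 2) ^ 2 / ((n + 1) ^ 2 * ((n ! : ℝ) ^ 2) ^ 3) := by
    rw [eq_div_iff (by positivity)]
    have := congrArg (fun m : ℕ => (m : ℝ) ^ 2) (factorial_succ_mul_catalan_sq_mul n)
    push_cast at this ⊢
    linear_combination this
  have hrpow : (n : ℝ) ^ (2 * (n : ℝ) - 3) = (n : ℝ) ^ (2 * n) / (n : ℝ) ^ 3 := by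
    rw [← rpow_natCast, ← rpow_natCast, ← rpow_sub hpos]
    push_cast
    ring_nf
  -- `ring` does not relate powers of distinct numeral bases with symbolic exponents.
  have h16 : (16 : ℝ) ^ (2 * n) = (2 ^ n) ^ 8 := by
    rw [← pow_mul, show n * 8 = 4 * (2 * n) by ring, pow_mul 2 4]
    norm_num
  rw [hrpow, div_pow, h16, hsize, ← stirlingSeq_sq_mul hn,
    ← stirlingSeq_sq_mul (n := 2 * n) (by omega)]
  push_cast
  simp only [div_pow, mul_pow]
  field_simp
  ring

/-- The size `((n+1)!·C_n²)²` of the sphere `Sph₂(n)` for rank-2 subgroups of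
Thompson's group `V` satisfies `((n+1)!·C_n²)² / ((16/e)^(2n) · n^(2n - 3)) → 2/π`. -/
theorem sphere2_V_asymptotics :
    Filter.Tendsto
      (fun n : ℕ => (((Nat.factorial (n + 1) * catalan n ^ 2) ^ 2 : ℕ) : ℝ) /
        ((16 / Real.exp 1) ^ (2 * n) * (n : ℝ) ^ (2 * (n : ℝ) - 3)))
      Filter.atTop (nhds (2 / Real.pi)) := by
  have hlim := tendsto_stirlingSeq_two_mul_pow_four_div_pow_six.mul
    (((tendsto_natCast_div_add_atTop (1 : ℝ)).pow 2).const_mul 2)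
  rw [show 1 / π * (2 * 1 ^ 2) = 2 / π by ring] at hlim
  refine hlim.congr' ?_
  filter_upwards [eventually_ne_atTop 0] with n hn
  exact (sphere2_ratio_eq_stirlingSeq hn).symm
end
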